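/- arXiv:2201.08699 — 4 statements merged into one kernel-verified Lean document; each statement's English description precedes it below -/
import Mathlib

section
/- The 6×6 matrix M over Z[q] with rows [−q−1, 0, −(q+1)(q+2), 0, 0, 0], [2−q, (q−1)², −(q−2)(2q+1), 0, 0, 0], [q+2, 0, q²+3q+3, 0, 0, 0], [3, 0, 0, −4(q+1), 0, −4(q+1)(q+2)], [0, 3, 0, −4(q−2), 4(q−1)², −4(q−2)(2q+1)], [0, 0, 3, 4(q+2), 0, 4(q²+3q+3)] has characteristic polynomial (x−1)(x−4)(x−(q−1)²)(x−(q+1)²)(x−4(q−1)²)(x−4(q+1)²). -/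
set_option maxRecDepth 4000
set_option maxHeartbeats 1600000

open Polynomial

/-- The variable `q` of `ℤ[q]`. -/
noncomputable def q5 : Polynomial ℤ := X

/-- The 6×6 matrix of the TQFT operator `Z'(holed torus)` for `kˣ ⋊ Z/2Z`. -/
noncomputable def M5 : Matrix (Fin 6) (Fin 6) (Polynomial ℤ) :=
  !![-q5 - 1, 0, -(q5 + 1) * (q5 + 2), 0, 0, 0;
     2 - q5, (q5 - 1) ^ 2, -(q5 - 2) * (2 * q5 + 1), 0, 0, 0;
     q5 + 2, 0, q5 ^ 2 + 3 * q5 + 3, 0, 0, 0;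
     3, 0, 0, -4 * (q5 + 1), 0, -4 * (q5 + 1) * (q5 + 2);
     0, 3, 0, -4 * (q5 - 2), 4 * (q5 - 1) ^ 2, -4 * (q5 - 2) * (2 * q5 + 1);
     0, 0, 3, 4 * (q5 + 2), 0, 4 * (q5 ^ 2 + 3 * q5 + 3)]

open Matrix in
/-- Upper-left 3×3 block of `M5`. -/
noncomputable def A5 : Matrix (Fin 3) (Fin 3) (Polynomial ℤ) :=
  !![-q5 - 1, 0, -(q5 + 1) * (q5 + 2);
     2 - q5, (q5 - 1) ^ 2, -(q5 - 2) * (2 * q5 + 1);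
     q5 + 2, 0, q5 ^ 2 + 3 * q5 + 3]

/-- Lower-left 3×3 block of `M5`. -/
noncomputable def C5 : Matrix (Fin 3) (Fin 3) (Polynomial ℤ) := !![3,0,0;0,3,0;0,0,3]

/-- Lower-right 3×3 block of `M5`. -/
noncomputable def D5 : Matrix (Fin 3) (Fin 3) (Polynomial ℤ) :=
  !![-4 * (q5 + 1), 0, -4 * (q5 + 1) * (q5 + 2);
     -4 * (q5 - 2), 4 * (q5 - 1) ^ 2, -4 * (q5 - 2) * (2 * q5 + 1);
     4 * (q5 + 2), 0, 4 * (q5 ^ 2 + 3 * q5 + 3)]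

open Matrix in
lemma M5_eq : M5 = (Matrix.reindex finSumFinEquiv finSumFinEquiv) (fromBlocks A5 0 C5 D5) := by
  ext i j
  fin_cases i <;> fin_cases j <;> rfl

lemma chA : A5.charpoly = (X - C 1) * (X - C ((q5 - 1) ^ 2)) * (X - C ((q5 + 1) ^ 2)) := by
  rw [Matrix.charpoly]
  simp only [A5, Matrix.charmatrix_apply, Matrix.det_fin_three, Matrix.map_apply,
    Matrix.one_apply, Matrix.diagonal_apply, Matrix.cons_val', Matrix.cons_val_zero,
    Matrix.cons_val_one, Matrix.head_cons, Matrix.head_fin_const, Matrix.cons_val_two,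
    Matrix.tail_cons, Matrix.empty_val', Matrix.cons_val_fin_one]
  norm_num [map_sub, map_add, _root_.map_mul, map_pow, map_neg, map_ofNat, Fin.ext_iff]
  simp only [Matrix.cons_val_two, Matrix.vecHead, Matrix.vecTail, Matrix.cons_val_one,
    Matrix.cons_val_zero, Matrix.cons_val_succ, Function.comp, map_sub, map_add, _root_.map_mul,
    map_pow, map_neg, map_ofNat, map_zero, map_one]
  ring

lemma chD : D5.charpoly = (X - C 4) * (X - C (4 * (q5 - 1) ^ 2)) * (X - C (4 * (q5 + 1) ^ 2)) := by
  rw [Matrix.charpoly]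
  simp only [D5, Matrix.charmatrix_apply, Matrix.det_fin_three, Matrix.map_apply,
    Matrix.one_apply, Matrix.diagonal_apply, Matrix.cons_val', Matrix.cons_val_zero,
    Matrix.cons_val_one, Matrix.head_cons, Matrix.head_fin_const, Matrix.cons_val_two,
    Matrix.tail_cons, Matrix.empty_val', Matrix.cons_val_fin_one]
  norm_num [map_sub, map_add, _root_.map_mul, map_pow, map_neg, map_ofNat, Fin.ext_iff]
  simp only [Matrix.cons_val_two, Matrix.vecHead, Matrix.vecTail, Matrix.cons_val_one,
    Matrix.cons_val_zero, Matrix.cons_val_succ, Function.comp, map_sub, map_add, _root_.map_mul,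
    map_pow, map_neg, map_ofNat, map_zero, map_one]
  ring

/-- The characteristic polynomial of `M5` is
`(x−1)(x−4)(x−(q−1)²)(x−(q+1)²)(x−4(q−1)²)(x−4(q+1)²)`. -/
theorem stmt5 :
    M5.charpoly = (X - C 1) * (X - C 4) * (X - C ((q5 - 1) ^ 2)) * (X - C ((q5 + 1) ^ 2))
      * (X - C (4 * (q5 - 1) ^ 2)) * (X - C (4 * (q5 + 1) ^ 2)) := by
  rw [M5_eq, Matrix.charpoly_reindex, Matrix.charpoly_fromBlocks_zero₁₂, chA, chD]
  ring
end

section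
/- The number of points of the representation variety Hom(π₁(Σ_g), AGL₁(F_q)) over a finite field F_q equals q^{2g} + q^{2g−1}((q−1)^{2g} − 1), where π₁(Σ_g) is the surface group with presentation ⟨a₁,b₁,…,a_g,b_g | ∏[a_i,b_i] = 1⟩. Equivalently, the number of 2g-tuples (A₁,B₁,…,A_g,B_g) in AGL₁(F_q)^{2g} with ∏ᵢ[Aᵢ,Bᵢ] = 1 equals q^{2g} + q^{2g−1}((q−1)^{2g} − 1). -/
/-!
Write `Aᵢ = affineMatrix aᵢ bᵢ` and `Bᵢ = affineMatrix cᵢ dᵢ`. The commutator `[Aᵢ, Bᵢ]` is the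
translation by `(aᵢ - 1) dᵢ - (cᵢ - 1) bᵢ`, so `∏ [Aᵢ, Bᵢ] = 1` says that the translation parts
`(bᵢ, dᵢ) ∈ F^{2g}` lie in the kernel of a linear form determined by the linear parts
`(aᵢ, cᵢ) ∈ (Fˣ)^{2g}`. This form vanishes only when all linear parts are `1`, giving `q^{2g}`
solutions; for each of the other `(q - 1)^{2g} - 1` choices its kernel has `q^{2g-1}` elements.
-/

open Finset

section AffineMatrix

variable {R : Type*} [CommRing R]

def affineMatrix (a b : R) : Matrix (Fin 2) (Fin 2) R := !![a, b; 0, 1]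

theorem affineMatrix_mul (a b c d : R) :
    affineMatrix a b * affineMatrix c d = affineMatrix (a * c) (a * d + b) := by
  simp [affineMatrix]

theorem affineMatrix_one_zero : affineMatrix (1 : R) 0 = 1 := by
  simp [affineMatrix, Matrix.one_fin_two]

theorem affineMatrix_inj {a b a' b' : R} :
    affineMatrix a b = affineMatrix a' b' ↔ a = a' ∧ b = b' := by
  simp [affineMatrix]

theorem list_prod_ofFn_affineMatrix_one {n : ℕ} (t : Fin n → R) :
    (List.ofFn fun i => affineMatrix 1 (t i)).prod = affineMatrix 1 (∑ i, t i) := by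
  induction n with
  | zero => exact affineMatrix_one_zero.symm
  | succ n ih => rw [List.ofFn_succ, List.prod_cons, ih, affineMatrix_mul, Fin.sum_univ_succ,
      one_mul, one_mul, add_comm]

end AffineMatrix

section Commutator

variable {F : Type*} [Field F]

theorem affineMatrix_inv {a : F} (ha : a ≠ 0) (b : F) :
    (affineMatrix a b)⁻¹ = affineMatrix a⁻¹ (-(a⁻¹ * b)) := by
  refine Matrix.inv_eq_right_inv ?_
  rw [affineMatrix_mul, mul_inv_cancel₀ ha, mul_neg, ← mul_assoc, mul_inv_cancel₀ ha, one_mul,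
    neg_add_cancel, affineMatrix_one_zero]

theorem affineMatrix_commutator {a c : F} (ha : a ≠ 0) (hc : c ≠ 0) (b d : F) :
    affineMatrix a b * affineMatrix c d * (affineMatrix a b)⁻¹ * (affineMatrix c d)⁻¹
      = affineMatrix 1 ((a - 1) * d - (c - 1) * b) := by
  rw [affineMatrix_inv ha, affineMatrix_inv hc, affineMatrix_mul, affineMatrix_mul,
    affineMatrix_mul, affineMatrix_inj]
  constructor
  · field_simp
  · field_simp
    ring

end Commutator

section CommutatorForm

variable {ι R : Type*} [Fintype ι] [CommRing R]

def commutatorForm (x : ι → Rˣ × Rˣ) : Module.Dual R (ι → R × R) where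
  toFun y := ∑ i, (((x i).1 - 1 : R) * (y i).2 - ((x i).2 - 1 : R) * (y i).1)
  map_add' y z := by
    simp only [Pi.add_apply, Prod.fst_add, Prod.snd_add, ← sum_add_distrib]
    exact sum_congr rfl fun i _ => by ring
  map_smul' r y := by
    simp only [Pi.smul_apply, Prod.smul_fst, Prod.smul_snd, smul_eq_mul, RingHom.id_apply,
      mul_sum]
    exact sum_congr rfl fun i _ => by ring

theorem commutatorForm_apply (x : ι → Rˣ × Rˣ) (y : ι → R × R) :
    commutatorForm x y = ∑ i, (((x i).1 - 1 : R) * (y i).2 - ((x i).2 - 1 : R) * (y i).1) :=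
  rfl

theorem commutatorForm_single [DecidableEq ι] (x : ι → Rˣ × Rˣ) (j : ι) (p : R × R) :
    commutatorForm x (Pi.single j p) = ((x j).1 - 1 : R) * p.2 - ((x j).2 - 1 : R) * p.1 := by
  rw [commutatorForm_apply, Fintype.sum_eq_single j fun i hi => by simp [hi], Pi.single_eq_same]

theorem commutatorForm_eq_zero_iff {x : ι → Rˣ × Rˣ} : commutatorForm x = 0 ↔ x = 1 := by
  classical
  constructor
  · intro h
    funext j
    have h₁ := LinearMap.congr_fun h (Pi.single j (0, 1))
    have h₂ := LinearMap.congr_fun h (Pi.single j (-1, 0))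
    simp only [commutatorForm_single, LinearMap.zero_apply] at h₁ h₂
    exact Prod.ext (Units.ext (by simpa [sub_eq_zero] using h₁))
      (Units.ext (by simpa [sub_eq_zero] using h₂))
  · rintro rfl
    exact LinearMap.ext fun y => by simp [commutatorForm_apply]

end CommutatorForm

theorem Module.Dual.natCard_ker_mul_of_ne_zero {K V : Type*} [Field K] [AddCommGroup V]
    [Module K V] [Module.Finite K V] {f : Module.Dual K V} (hf : f ≠ 0) :
    Nat.card (LinearMap.ker f) * Nat.card K = Nat.card V := by
  rw [Module.natCard_eq_pow_finrank (K := K), Module.natCard_eq_pow_finrank (K := K) (V := V),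
    ← Module.Dual.finrank_ker_add_one_of_ne_zero hf, pow_succ]

section Counting

theorem natCard_pi_prod_self (ι α : Type*) [Fintype ι] [Fintype α] :
    Nat.card (ι → α × α) = Fintype.card α ^ (2 * Fintype.card ι) := by
  rw [Nat.card_fun, Nat.card_prod, Nat.card_eq_fintype_card, Nat.card_eq_fintype_card, ← sq,
    pow_mul]

variable {ι F : Type*} [Fintype ι] [Field F] [Fintype F]

theorem natCard_ker_commutatorForm_one :
    Nat.card (LinearMap.ker (commutatorForm (1 : ι → Fˣ × Fˣ))) =
      Fintype.card F ^ (2 * Fintype.card ι) := by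
  rw [commutatorForm_eq_zero_iff.mpr rfl, LinearMap.ker_zero,
    Nat.card_congr Submodule.topEquiv.toEquiv, natCard_pi_prod_self]

theorem natCard_ker_commutatorForm_of_ne_one {x : ι → Fˣ × Fˣ} (hx : x ≠ 1) :
    Nat.card (LinearMap.ker (commutatorForm x)) =
      Fintype.card F ^ (2 * Fintype.card ι - 1) := by
  have hι : 0 < Fintype.card ι :=
    Fintype.card_pos_iff.mpr (not_isEmpty_iff.mp fun _ => hx (Subsingleton.elim _ _))
  have key :=
    Module.Dual.natCard_ker_mul_of_ne_zero fun h => hx (commutatorForm_eq_zero_iff.mp h)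
  rw [natCard_pi_prod_self, Nat.card_eq_fintype_card (α := F),
    show 2 * Fintype.card ι = 2 * Fintype.card ι - 1 + 1 by omega, pow_succ] at key
  exact Nat.eq_of_mul_eq_mul_right Fintype.card_pos key

theorem natCard_commutatorForm_eq_zero :
    Nat.card {p : (ι → Fˣ × Fˣ) × (ι → F × F) // commutatorForm p.1 p.2 = 0} =
      Fintype.card F ^ (2 * Fintype.card ι)
        + ((Fintype.card F - 1) ^ (2 * Fintype.card ι) - 1)
          * Fintype.card F ^ (2 * Fintype.card ι - 1) := by
  classical
  rw [Nat.card_congr (Equiv.subtypeProdEquivSigmaSubtype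
    fun (x : ι → Fˣ × Fˣ) (y : ι → F × F) => commutatorForm x y = 0), Nat.card_sigma,
    Fintype.sum_eq_add_sum_compl 1]
  change Nat.card (LinearMap.ker _) + ∑ x ∈ {1}ᶜ, Nat.card (LinearMap.ker _) = _
  rw [natCard_ker_commutatorForm_one, sum_congr rfl fun x hx =>
      natCard_ker_commutatorForm_of_ne_one (mem_compl.mp hx ∘ mem_singleton.mpr),
    sum_const, card_compl, card_singleton, Fintype.card_fun, Fintype.card_prod,
    Fintype.card_units, ← sq, ← pow_mul, smul_eq_mul]

end Counting

section Parametrization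

variable {ι F : Type*} [Field F]

def affinePairs (p : (ι → Fˣ × Fˣ) × (ι → F × F)) :
    ι → Matrix (Fin 2) (Fin 2) F × Matrix (Fin 2) (Fin 2) F :=
  fun i => (affineMatrix (p.1 i).1 (p.2 i).1, affineMatrix (p.1 i).2 (p.2 i).2)

theorem affinePairs_injective : Function.Injective (affinePairs (ι := ι) (F := F)) := by
  intro p p' h
  have h₁ i := affineMatrix_inj.mp (congrArg Prod.fst (congrFun h i))
  have h₂ i := affineMatrix_inj.mp (congrArg Prod.snd (congrFun h i))
  exact Prod.ext (funext fun i => Prod.ext (Units.ext (h₁ i).1) (Units.ext (h₂ i).1))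
    (funext fun i => Prod.ext (h₁ i).2 (h₂ i).2)

theorem list_prod_ofFn_commutator_affinePairs {g : ℕ}
    (p : (Fin g → Fˣ × Fˣ) × (Fin g → F × F)) :
    (List.ofFn fun i => (affinePairs p i).1 * (affinePairs p i).2
        * ((affinePairs p i).1)⁻¹ * ((affinePairs p i).2)⁻¹).prod
      = affineMatrix 1 (commutatorForm p.1 p.2) := by
  have h i := affineMatrix_commutator (p.1 i).1.ne_zero (p.1 i).2.ne_zero (p.2 i).1 (p.2 i).2
  simp only [affinePairs, h, list_prod_ofFn_affineMatrix_one, commutatorForm_apply]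

theorem natCard_commutator_solutions_eq (g : ℕ) :
    Nat.card {v : Fin g → Matrix (Fin 2) (Fin 2) F × Matrix (Fin 2) (Fin 2) F //
        (∀ i, (∃ a b : F, a ≠ 0 ∧ (v i).1 = !![a, b; 0, 1]) ∧
              (∃ a b : F, a ≠ 0 ∧ (v i).2 = !![a, b; 0, 1])) ∧
        (List.ofFn fun i => (v i).1 * (v i).2 * ((v i).1)⁻¹ * ((v i).2)⁻¹).prod = 1}
      = Nat.card {p : (Fin g → Fˣ × Fˣ) × (Fin g → F × F) // commutatorForm p.1 p.2 = 0} := by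
  refine (Nat.card_congr (Equiv.ofBijective (fun p => ⟨affinePairs p.1,
    fun i => ⟨⟨_, _, Units.ne_zero _, rfl⟩, ⟨_, _, Units.ne_zero _, rfl⟩⟩,
    by rw [list_prod_ofFn_commutator_affinePairs, p.2, affineMatrix_one_zero]⟩) ⟨?_, ?_⟩)).symm
  · exact fun p p' h => Subtype.ext (affinePairs_injective (congrArg Subtype.val h))
  · rintro ⟨v, hv, hprod⟩
    choose a b ha hab using fun i => (hv i).1
    choose c d hc hcd using fun i => (hv i).2
    set p : (Fin g → Fˣ × Fˣ) × (Fin g → F × F) :=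
      (fun i => (Units.mk0 (a i) (ha i), Units.mk0 (c i) (hc i)), fun i => (b i, d i))
    have hp : affinePairs p = v := funext fun i => Prod.ext (hab i).symm (hcd i).symm
    rw [← hp, list_prod_ofFn_commutator_affinePairs, ← affineMatrix_one_zero,
      affineMatrix_inj] at hprod
    exact ⟨⟨p, hprod.2⟩, Subtype.ext hp⟩

end Parametrization

theorem stmt9_general {F : Type*} [Field F] [Fintype F] (g : ℕ) :
    (Nat.card {v : Fin g → Matrix (Fin 2) (Fin 2) F × Matrix (Fin 2) (Fin 2) F //
        (∀ i, (∃ a b : F, a ≠ 0 ∧ (v i).1 = !![a, b; 0, 1]) ∧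
              (∃ a b : F, a ≠ 0 ∧ (v i).2 = !![a, b; 0, 1])) ∧
        (List.ofFn fun i => (v i).1 * (v i).2 * ((v i).1)⁻¹ * ((v i).2)⁻¹).prod = 1} : ℤ)
      = (Fintype.card F : ℤ) ^ (2 * g)
        + (Fintype.card F : ℤ) ^ (2 * g - 1) * (((Fintype.card F : ℤ) - 1) ^ (2 * g) - 1) := by
  rw [natCard_commutator_solutions_eq, natCard_commutatorForm_eq_zero, Fintype.card_fin]
  have hq : 2 ≤ Fintype.card F := Fintype.one_lt_card
  have hpow : 1 ≤ (Fintype.card F - 1) ^ (2 * g) := Nat.one_le_pow _ _ (by omega)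
  push_cast [Nat.cast_sub hpow, Nat.cast_sub (by omega : 1 ≤ Fintype.card F)]
  ring

/-- The number of `2g`-tuples `(A₁,B₁,…,A_g,B_g)` in `AGL₁(F_q)` (matrices `!![a,b;0,1]`,
`a ≠ 0`) with `∏ᵢ [Aᵢ,Bᵢ] = 1` equals `q^(2g) + q^(2g-1)((q-1)^(2g) - 1)`. -/
theorem stmt9 {F : Type*} [Field F] [Fintype F] (g : ℕ) (hg : 1 ≤ g) :
    (Nat.card {v : Fin g → Matrix (Fin 2) (Fin 2) F × Matrix (Fin 2) (Fin 2) F //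
        (∀ i, (∃ a b : F, a ≠ 0 ∧ (v i).1 = !![a, b; 0, 1]) ∧
              (∃ a b : F, a ≠ 0 ∧ (v i).2 = !![a, b; 0, 1])) ∧
        (List.ofFn fun i => (v i).1 * (v i).2 * ((v i).1)⁻¹ * ((v i).2)⁻¹).prod = 1} : ℤ)
      = (Fintype.card F : ℤ) ^ (2 * g)
        + (Fintype.card F : ℤ) ^ (2 * g - 1) * (((Fintype.card F : ℤ) - 1) ^ (2 * g) - 1) :=
  stmt9_general g
end

section
/- In AGL₁(k), define I = {identity}, J = {[[1,b],[0,1]] : b ≠ 0}, M = {[[a,b],[0,1]] : a ≠ 0, a ≠ 1}. Then the map ((a,x,t,b) ↦ (g₁,g₂)) with g₁ = [[a, t(1−a)],[0,1]] and g₂ = [[x, (b − t(1−a)(1−x))/(a−1)],[0,1]] is a bijection from (k∖{0,1}) × (k∖{0}) × k × (k∖{0}) onto the set {(g₁,g₂) ∈ AGL₁(k)² : g₁ ∈ M, [g₁,g₂] ∈ J}, and under this bijection [g₁,g₂] = [[1,b],[0,1]]. -/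
/-!
The commutator of `!![a, c; 0, 1]` and `!![x, d; 0, 1]` is the translation by
`c (1 - x) + d (a - 1)`. For `a ≠ 1`, the entry `c` of `g₁` corresponds to `t = c / (1 - a)`, and
once `a`, `x`, `c` are fixed the translation `b` of the commutator determines `d`, being affine in
`d` with slope `a - 1 ≠ 0`.
-/

namespace AGL1

theorem mul_eq {R : Type*} [Semiring R] (a c x d : R) :
    (!![a, c; 0, 1] : Matrix (Fin 2) (Fin 2) R) * !![x, d; 0, 1] = !![a * x, a * d + c; 0, 1] := by
  simp

theorem eq_iff {R : Type*} [Zero R] [One R] {a c a' c' : R} :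
    (!![a, c; 0, 1] : Matrix (Fin 2) (Fin 2) R) = !![a', c'; 0, 1] ↔ a = a' ∧ c = c' := by
  simp

variable {k : Type*} [Field k]

theorem inv_eq {a : k} (c : k) (ha : a ≠ 0) :
    (!![a, c; 0, 1] : Matrix (Fin 2) (Fin 2) k)⁻¹ = !![a⁻¹, -(a⁻¹ * c); 0, 1] := by
  refine Matrix.inv_eq_right_inv ?_
  rw [mul_eq, mul_neg, mul_inv_cancel_left₀ ha, mul_inv_cancel₀ ha, neg_add_cancel,
    Matrix.one_fin_two]

theorem commutator_eq {a x : k} (c d : k) (ha : a ≠ 0) (hx : x ≠ 0) :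
    (!![a, c; 0, 1] : Matrix (Fin 2) (Fin 2) k) * !![x, d; 0, 1] *
      (!![a, c; 0, 1])⁻¹ * (!![x, d; 0, 1])⁻¹ = !![1, c * (1 - x) + d * (a - 1); 0, 1] := by
  rw [inv_eq c ha, inv_eq d hx, mul_eq, mul_eq, mul_eq, eq_iff]
  constructor
  · field_simp
  · field_simp
    ring

end AGL1

open AGL1 in
/-- In AGL₁(k), the map `(a,x,t,b) ↦ (g₁,g₂)` with `g₁ = !![a, t(1−a); 0,1]` and
`g₂ = !![x, (b − t(1−a)(1−x))/(a−1); 0,1]` is a bijection from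
`(k∖{0,1}) × (k∖{0}) × k × (k∖{0})` onto `{(g₁,g₂) ∈ AGL₁(k)² : g₁ ∈ M, [g₁,g₂] ∈ J}`,
and under this bijection `[g₁,g₂] = !![1,b;0,1]`. -/
theorem stmt11 {k : Type*} [Field k] :
    let f : {a : k // a ≠ 0 ∧ a ≠ 1} × {x : k // x ≠ 0} × k × {b : k // b ≠ 0} →
        Matrix (Fin 2) (Fin 2) k × Matrix (Fin 2) (Fin 2) k :=
      fun p => (!![(p.1 : k), (p.2.2.1 : k) * (1 - p.1); 0, 1],
                !![(p.2.1 : k), ((p.2.2.2 : k) - (p.2.2.1 : k) * (1 - p.1) * (1 - p.2.1))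
                    / ((p.1 : k) - 1); 0, 1])
    Set.BijOn f Set.univ
      {P : Matrix (Fin 2) (Fin 2) k × Matrix (Fin 2) (Fin 2) k |
        (∃ a c : k, a ≠ 0 ∧ a ≠ 1 ∧ P.1 = !![a, c; 0, 1]) ∧
        (∃ a c : k, a ≠ 0 ∧ P.2 = !![a, c; 0, 1]) ∧
        (∃ b : k, b ≠ 0 ∧ P.1 * P.2 * (P.1)⁻¹ * (P.2)⁻¹ = !![1, b; 0, 1])} ∧
    ∀ p, (f p).1 * (f p).2 * ((f p).1)⁻¹ * ((f p).2)⁻¹ = !![1, (p.2.2.2 : k); 0, 1] := by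
  intro f
  have hcomm :
      ∀ p, (f p).1 * (f p).2 * ((f p).1)⁻¹ * ((f p).2)⁻¹ = !![1, (p.2.2.2 : k); 0, 1] := by
    rintro ⟨⟨a, ha0, ha1⟩, ⟨x, hx⟩, t, b, -⟩
    have ha1 : a - 1 ≠ 0 := sub_ne_zero.mpr ha1
    refine (commutator_eq _ _ ha0 hx).trans (eq_iff.mpr ⟨rfl, ?_⟩)
    field_simp
    ring
  refine ⟨⟨fun p _ => ?_, fun p _ q _ hpq => ?_, fun ⟨_, _⟩ hP => ?_⟩, hcomm⟩
  · obtain ⟨⟨a, ha0, ha1⟩, ⟨x, hx⟩, t, b, hb⟩ := p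
    exact ⟨⟨a, _, ha0, ha1, rfl⟩, ⟨x, _, hx, rfl⟩, b, hb, hcomm _⟩
  · -- `b` is the translation of the commutator of `f p = f q`
    have hb := eq_iff.mp ((hcomm p).symm.trans (hpq ▸ hcomm q))
    obtain ⟨⟨a, _, ha1⟩, ⟨x, _⟩, t, b, _⟩ := p
    obtain ⟨⟨a', _⟩, ⟨x', _⟩, t', b', _⟩ := q
    obtain ⟨⟨rfl, htt⟩, rfl, -⟩ := And.imp eq_iff.mp eq_iff.mp (Prod.ext_iff.mp hpq)
    obtain rfl := mul_right_cancel₀ (sub_ne_zero.mpr ha1.symm) htt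
    obtain rfl := hb.2
    rfl
  · obtain ⟨⟨a, c, ha0, ha1, rfl⟩, ⟨x, d, hx, rfl⟩, b, hb, hPb⟩ := hP
    have hb' : c * (1 - x) + d * (a - 1) = b :=
      (eq_iff.mp ((commutator_eq c d ha0 hx).symm.trans hPb)).2
    have ha1' : a - 1 ≠ 0 := sub_ne_zero.mpr ha1
    have ha1'' : 1 - a ≠ 0 := sub_ne_zero.mpr ha1.symm
    refine ⟨⟨⟨a, ha0, ha1⟩, ⟨x, hx⟩, c / (1 - a), b, hb⟩, trivial, Prod.ext ?_ ?_⟩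
    · exact eq_iff.mpr ⟨rfl, div_mul_cancel₀ c ha1''⟩
    · refine eq_iff.mpr ⟨rfl, ?_⟩
      rw [div_mul_cancel₀ c ha1'', div_eq_iff ha1']
      linear_combination -hb'
end

section
/- In AGL₁(k), for g₁ ∈ J (i.e., g₁ = [[1,c],[0,1]] with c ≠ 0), the set of g₂ ∈ AGL₁(k) with [g₁,g₂] ∈ J is in bijection with (k∖{0,1}) × k × (k∖{0}) via (x,t,b) ↦ (g₁,g₂) = ([[1, b/(1−x)],[0,1]], [[x, t(1−x)],[0,1]]), and under this bijection [g₁,g₂] = [[1,b],[0,1]]. -/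
lemma inv_upper {k : Type*} [Field k] (c : k) :
    (!![1, c; 0, 1] : Matrix (Fin 2) (Fin 2) k)⁻¹ = !![1, -c; 0, 1] := by
  apply Matrix.inv_eq_left_inv
  rw [Matrix.mul_fin_two, Matrix.one_fin_two]
  norm_num

lemma inv_aff {k : Type*} [Field k] {a : k} (ha : a ≠ 0) (d : k) :
    (!![a, d; 0, 1] : Matrix (Fin 2) (Fin 2) k)⁻¹ = !![a⁻¹, -(d * a⁻¹); 0, 1] := by
  apply Matrix.inv_eq_left_inv
  rw [Matrix.mul_fin_two, Matrix.one_fin_two]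
  field_simp
  simp [ha]

lemma comm_eq {k : Type*} [Field k] (c : k) {a : k} (ha : a ≠ 0) (d : k) :
    (!![1, c; 0, 1] : Matrix (Fin 2) (Fin 2) k) * !![a, d; 0, 1] *
      (!![1, c; 0, 1] : Matrix (Fin 2) (Fin 2) k)⁻¹ * (!![a, d; 0, 1])⁻¹ =
      !![1, c * (1 - a); 0, 1] := by
  rw [inv_upper, inv_aff ha, Matrix.mul_fin_two, Matrix.mul_fin_two, Matrix.mul_fin_two]
  ext i j
  fin_cases i <;> fin_cases j <;> simp <;> field_simp <;> ring


/-- In AGL₁(k), the map `(x,t,b) ↦ (g₁,g₂) = (!![1, b/(1−x); 0,1], !![x, t(1−x); 0,1])`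
is a bijection from `(k∖{0,1}) × k × (k∖{0})` onto
`{(g₁,g₂) ∈ AGL₁(k)² : g₁ ∈ J, [g₁,g₂] ∈ J}`, and under it `[g₁,g₂] = !![1,b;0,1]`. -/
theorem stmt12 {k : Type*} [Field k] :
    let f : {x : k // x ≠ 0 ∧ x ≠ 1} × k × {b : k // b ≠ 0} →
        Matrix (Fin 2) (Fin 2) k × Matrix (Fin 2) (Fin 2) k :=
      fun p => (!![1, (p.2.2 : k) / (1 - p.1); 0, 1],
                !![(p.1 : k), p.2.1 * (1 - p.1); 0, 1])
    Set.BijOn f Set.univ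
      {P : Matrix (Fin 2) (Fin 2) k × Matrix (Fin 2) (Fin 2) k |
        (∃ c : k, c ≠ 0 ∧ P.1 = !![1, c; 0, 1]) ∧
        (∃ a c : k, a ≠ 0 ∧ P.2 = !![a, c; 0, 1]) ∧
        (∃ b : k, b ≠ 0 ∧ P.1 * P.2 * (P.1)⁻¹ * (P.2)⁻¹ = !![1, b; 0, 1])} ∧
    ∀ p, (f p).1 * (f p).2 * ((f p).1)⁻¹ * ((f p).2)⁻¹ = !![1, (p.2.2 : k); 0, 1] := by
  intro f
  have hcomm : ∀ p : {x : k // x ≠ 0 ∧ x ≠ 1} × k × {b : k // b ≠ 0},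
      (f p).1 * (f p).2 * ((f p).1)⁻¹ * ((f p).2)⁻¹ = !![1, (p.2.2 : k); 0, 1] := by
    intro ⟨⟨x, hx0, hx1⟩, t, ⟨b, hb⟩⟩
    have h1x : (1 : k) - x ≠ 0 := sub_ne_zero.mpr (Ne.symm hx1)
    simp only [f]
    rw [comm_eq _ hx0]
    congr 1
    field_simp
  refine ⟨⟨?_, ?_, ?_⟩, hcomm⟩
  · -- MapsTo
    rintro ⟨⟨x, hx0, hx1⟩, t, ⟨b, hb⟩⟩ -
    have h1x : (1 : k) - x ≠ 0 := sub_ne_zero.mpr (Ne.symm hx1)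
    refine ⟨⟨b / (1 - x), div_ne_zero hb h1x, rfl⟩, ⟨x, t * (1 - x), hx0, rfl⟩,
      ⟨b, hb, hcomm ⟨⟨x, hx0, hx1⟩, t, ⟨b, hb⟩⟩⟩⟩
  · -- InjOn
    rintro ⟨⟨x, hx0, hx1⟩, t, ⟨b, hb⟩⟩ - ⟨⟨x', hx0', hx1'⟩, t', ⟨b', hb'⟩⟩ - h
    have h1 : (f (⟨⟨x, hx0, hx1⟩, t, ⟨b, hb⟩⟩ : {x : k // x ≠ 0 ∧ x ≠ 1} × k × {b : k // b ≠ 0})).1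
        = (f ⟨⟨x', hx0', hx1'⟩, t', ⟨b', hb'⟩⟩).1 := congrArg Prod.fst h
    have h2 := congrArg Prod.snd h
    simp only [f] at h1 h2
    have hx : x = x' := by
      have := congrFun (congrFun h2 0) 0; simpa using this
    subst hx
    have h1x : (1 : k) - x ≠ 0 := sub_ne_zero.mpr (Ne.symm hx1)
    have ht : t = t' := by
      have := congrFun (congrFun h2 0) 1
      simp only [Matrix.of_apply, Matrix.cons_val', Matrix.cons_val_zero, Matrix.cons_val_one,
        Matrix.head_cons, Matrix.empty_val', Matrix.cons_val_fin_one] at this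
      exact mul_right_cancel₀ h1x this
    have hbb : b = b' := by
      have := congrFun (congrFun h1 0) 1
      simp only [Matrix.of_apply, Matrix.cons_val', Matrix.cons_val_zero, Matrix.cons_val_one,
        Matrix.head_cons, Matrix.empty_val', Matrix.cons_val_fin_one] at this
      field_simp at this; exact this
    simp [ht, hbb]
  · -- SurjOn
    rintro ⟨P1, P2⟩ ⟨⟨c, hc, h1⟩, ⟨a, d, ha, h2⟩, ⟨b, hb, h3⟩⟩
    rw [h1, h2, comm_eq c ha d] at h3
    have hbeq : c * (1 - a) = b := by
      have := congrFun (congrFun h3 0) 1; simpa using this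
    have ha1 : a ≠ 1 := by
      rintro rfl
      simp at hbeq
      exact hb hbeq.symm
    have h1a : (1 : k) - a ≠ 0 := sub_ne_zero.mpr (Ne.symm ha1)
    refine ⟨⟨⟨a, ha, ha1⟩, d / (1 - a), ⟨b, hb⟩⟩, Set.mem_univ _, ?_⟩
    simp only [f]
    rw [Prod.ext_iff]
    constructor
    · rw [h1]
      congr 1
      rw [← hbeq]
      field_simp
    · rw [h2]
      congr 1
      field_simp
end
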